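/- arXiv:2112.05729 — 2 statements merged into one kernel-verified Lean document; each statement's English description precedes it below -/
import Mathlib

section
/- In a two-sector Leontief model with price-dependent demand, x = Ax + d(p), p = Aᵀp + βδ₁, where d : ℝ² → ℝ² is C¹ with each d_i strictly decreasing in p_i, decreasing the energy coefficient A_{12} strictly decreases the equilibrium price p₂ and strictly increases the equilibrium final demand d₂(p₂), provided ‖A‖ < 1 and β > 0 and the column j=2 is downstream of sector 1. -/
/-!
By Cramer's rule the equilibrium price equation `(1 - Aᵀ) p = β e₀` gives
`p₁ · det (1 - A) = A₀₁ β`. Lowering `A₀₁` by `ε` turns `det (1 - A)` into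
`det (1 - A) + ε A₁₀`, and `p₁` then drops because
`det (1 - A) + A₀₁ A₁₀ = (1 - A₀₀)(1 - A₁₁) > 0`; demand rises since it is antitone.
Positivity of `det (1 - A)` comes from `‖A‖ < 1`: for `t ∈ [0, 1]` the matrix `t A` has
norm `< 1`, hence no nonzero fixed vector, so `t ↦ det (1 - t A)` never vanishes on
`[0, 1]` and keeps the sign it has at `t = 0`.
-/
noncomputable def euclideanOpNorm {d : ℕ} (A : Matrix (Fin d) (Fin d) ℝ) : ℝ :=
  ‖LinearMap.toContinuousLinearMap (Matrix.toEuclideanLin A)‖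

open Matrix Set

lemma euclideanOpNorm_smul {n : ℕ} (t : ℝ) (M : Matrix (Fin n) (Fin n) ℝ) :
    euclideanOpNorm (t • M) = |t| * euclideanOpNorm M := by
  simp only [euclideanOpNorm, map_smul, norm_smul, Real.norm_eq_abs]

lemma norm_toLp_mulVec_le {n : ℕ} (M : Matrix (Fin n) (Fin n) ℝ) (v : Fin n → ℝ) :
    ‖WithLp.toLp 2 (M *ᵥ v)‖ ≤ euclideanOpNorm M * ‖WithLp.toLp 2 v‖ := by
  simpa [euclideanOpNorm, Matrix.toLpLin_toLp] using
    (LinearMap.toContinuousLinearMap (Matrix.toEuclideanLin M)).le_opNorm (WithLp.toLp 2 v)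

lemma det_one_sub_ne_zero_of_euclideanOpNorm_lt_one {n : ℕ} {M : Matrix (Fin n) (Fin n) ℝ}
    (h : euclideanOpNorm M < 1) : (1 - M).det ≠ 0 := by
  intro hdet
  obtain ⟨v, hv0, hv⟩ := exists_mulVec_eq_zero_iff.2 hdet
  rw [sub_mulVec, one_mulVec, sub_eq_zero, eq_comm] at hv
  have hpos : 0 < ‖WithLp.toLp 2 v‖ := by simpa using hv0
  have := norm_toLp_mulVec_le M v
  rw [hv] at this
  nlinarith

lemma det_one_sub_pos_of_euclideanOpNorm_lt_one {n : ℕ} {M : Matrix (Fin n) (Fin n) ℝ}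
    (h : euclideanOpNorm M < 1) : 0 < (1 - M).det := by
  by_contra! hle
  have hcont : ContinuousOn (fun t : ℝ => (1 - t • M).det) (Icc 0 1) := by
    fun_prop
  obtain ⟨t, ht, hzero⟩ := intermediate_value_Icc' zero_le_one hcont
    (show (0 : ℝ) ∈ Icc _ _ by simp [hle])
  refine det_one_sub_ne_zero_of_euclideanOpNorm_lt_one ?_ hzero
  rw [euclideanOpNorm_smul, abs_of_nonneg ht.1]
  exact mul_lt_one_of_nonneg_of_lt_one_right ht.2 (norm_nonneg _) h

lemma det_one_sub_fin_two (M : Matrix (Fin 2) (Fin 2) ℝ) :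
    (1 - M).det = (1 - M 0 0) * (1 - M 1 1) - M 0 1 * M 1 0 := by
  simp [det_fin_two]

lemma mul_det_one_sub_of_eq_transpose_mulVec_add {M : Matrix (Fin 2) (Fin 2) ℝ}
    {p b : Fin 2 → ℝ} (hp : p = Mᵀ *ᵥ p + b) :
    p 1 * (1 - M).det = M 0 1 * b 0 + (1 - M 0 0) * b 1 := by
  have h0 := congrFun hp 0
  have h1 := congrFun hp 1
  simp only [Pi.add_apply, mulVec, dotProduct, Fin.sum_univ_two, transpose_apply] at h0 h1
  rw [det_one_sub_fin_two]
  linear_combination M 0 1 * h0 + (1 - M 0 0) * h1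

theorem stmt_12_general (A : Matrix (Fin 2) (Fin 2) ℝ)
    (hApos : ∀ i j, 0 ≤ A i j) (hA : euclideanOpNorm A < 1)
    (β : ℝ) (hβ : 0 < β)
    (dem : Fin 2 → ℝ → ℝ)
    (hanti : ∀ i, StrictAnti (dem i))
    (ε : ℝ) (hε : 0 < ε)
    (A' : Matrix (Fin 2) (Fin 2) ℝ)
    (hA'def : A' = A - Matrix.single 0 1 ε)
    (p p' : Fin 2 → ℝ)
    (hp : p = Matrix.mulVec A.transpose p + Pi.single 0 β)
    (hp' : p' = Matrix.mulVec A'.transpose p' + Pi.single 0 β) :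
    p' 1 < p 1 ∧ dem 1 (p 1) < dem 1 (p' 1) := by
  obtain ⟨h00, h01, h10, h11⟩ : A' 0 0 = A 0 0 ∧ A' 0 1 = A 0 1 - ε ∧ A' 1 0 = A 1 0 ∧
      A' 1 1 = A 1 1 := by
    simp [hA'def]
  set D := (1 - A 0 0) * (1 - A 1 1) - A 0 1 * A 1 0 with hDdef
  have hD : 0 < D := by
    rw [hDdef, ← det_one_sub_fin_two]
    exact det_one_sub_pos_of_euclideanOpNorm_lt_one hA
  have hD' : 0 < D + ε * A 1 0 := by
    have := hApos 1 0
    positivity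
  have hp1 : p 1 * D = A 0 1 * β := by
    simpa [det_one_sub_fin_two] using mul_det_one_sub_of_eq_transpose_mulVec_add hp
  have hp1' : p' 1 * (D + ε * A 1 0) = (A 0 1 - ε) * β := by
    have := mul_det_one_sub_of_eq_transpose_mulVec_add hp'
    simp only [det_one_sub_fin_two, h00, h01, h10, h11, Pi.single_eq_same,
      Pi.single_eq_of_ne one_ne_zero, mul_zero, add_zero] at this
    linear_combination this
  have hlt : p' 1 < p 1 := by
    rw [eq_div_of_mul_eq hD.ne' hp1, eq_div_of_mul_eq hD'.ne' hp1', div_lt_div_iff₀ hD' hD]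
    have hcorner : 0 < D + A 0 1 * A 1 0 := by
      have := mul_nonneg (hApos 0 1) (hApos 1 0)
      linarith
    nlinarith [mul_pos (mul_pos hε hβ) hcorner]
  exact ⟨hlt, hanti 1 hlt⟩

/-- Price rebound mechanism in a two-sector Leontief model (sector `0` = energy):
with prices `p = Aᵀ p + β δ₀` and demand `d i` strictly decreasing and C¹, strictly
decreasing the energy coefficient `A₀₁` (by `0 < ε ≤ A₀₁`, keeping the model
well-posed) strictly decreases the equilibrium price `p₁` of the target sector and
strictly increases its equilibrium final demand `d₁(p₁)`. -/
theorem stmt_12 (A : Matrix (Fin 2) (Fin 2) ℝ)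
    (hApos : ∀ i j, 0 ≤ A i j) (hA : euclideanOpNorm A < 1)
    (hdown : 0 < A 0 1)
    (β : ℝ) (hβ : 0 < β)
    (dem : Fin 2 → ℝ → ℝ)
    (hdem : ∀ i, ContDiff ℝ 1 (dem i)) (hanti : ∀ i, StrictAnti (dem i))
    (ε : ℝ) (hε : 0 < ε) (hεA : ε ≤ A 0 1)
    (A' : Matrix (Fin 2) (Fin 2) ℝ)
    (hA'def : A' = A - Matrix.single 0 1 ε)
    (hA' : euclideanOpNorm A' < 1)
    (p p' : Fin 2 → ℝ)
    (hp : p = Matrix.mulVec A.transpose p + Pi.single 0 β)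
    (hp' : p' = Matrix.mulVec A'.transpose p' + Pi.single 0 β) :
    p' 1 < p 1 ∧ dem 1 (p 1) < dem 1 (p' 1) :=
  stmt_12_general A hApos hA β hβ dem hanti ε hε A' hA'def p p' hp hp'
end

section
/- In the system x = τ, y = u_y(αx + βz), z = g(y) where g : ℝ → ℝ is C¹ and strictly monotone with g' never zero, for every u_y in a neighborhood of 1 there exists a replacement assignment z = h_{u_y}(y) (depending only on y) such that the new equilibrium z-value equals the unintervened equilibrium z-value, for all τ in a neighborhood of a reference τ₀, provided α ≠ 0, and the unintervened system is uniquely solvable near the reference point (1 − βg'(y₀) ≠ 0 at the reference equilibrium). -/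
open Topology Filter

/-!
The unintervened equilibrium branch `y*(τ)` solves `y - β g(y) = ατ`; the map
`y ↦ y - β g(y)` has derivative `1 - β g'(y₀) ≠ 0` at `y₀`, so its local inverse `ψ` gives
`y*(τ) = ψ(ατ)` near `τ₀`. Keeping `z' = z*`, the intervened equation forces `y' = u_y y*`,
and `h(v) = g(v / u_y)` is then the assignment `z* ∘ (y^{(u)})⁻¹` in closed form.
-/

theorem HasStrictDerivAt.exists_local_fixedPoint_branch {𝕜 : Type*} [NontriviallyNormedField 𝕜]
    [CompleteSpace 𝕜] {g : 𝕜 → 𝕜} {g' β y₀ : 𝕜} (hg : HasStrictDerivAt g g' y₀)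
    (hsolv : 1 - β * g' ≠ 0) :
    ∃ ψ : 𝕜 → 𝕜, ψ (y₀ - β * g y₀) = y₀ ∧
      ∀ᶠ a in 𝓝 (y₀ - β * g y₀), ψ a = a + β * g (ψ a) := by
  have hF : HasStrictDerivAt (fun y => y - β * g y) (1 - β * g') y₀ :=
    (hasStrictDerivAt_id y₀).sub (hg.const_mul β)
  refine ⟨hF.localInverse _ _ _ hsolv, (hF.eventually_left_inverse hsolv).self_of_nhds, ?_⟩
  filter_upwards [hF.eventually_right_inverse hsolv] with a ha
  exact eq_add_of_sub_eq ha

theorem stmt_19_general (α β τ₀ y₀ z₀ : ℝ)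
    (g : ℝ → ℝ) (hg : ContDiff ℝ 1 g)
    (hy₀ : y₀ = α * τ₀ + β * z₀) (hz₀ : z₀ = g y₀)
    (hsolv : 1 - β * deriv g y₀ ≠ 0) :
    ∃ W ∈ 𝓝 (1 : ℝ), ∀ u_y ∈ W,
      ∃ h : ℝ → ℝ, ∃ T ∈ 𝓝 τ₀,
        ∃ ys zs y' z' : ℝ → ℝ,
          ys τ₀ = y₀ ∧ zs τ₀ = z₀ ∧
          ∀ τ ∈ T,
            -- unintervened equilibrium branch
            (ys τ = α * τ + β * zs τ ∧ zs τ = g (ys τ)) ∧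
            -- intervened equilibrium with the replacement assignment `z = h(y)`
            (y' τ = u_y * (α * τ + β * z' τ) ∧ z' τ = h (y' τ)) ∧
            -- invariance of the `z`-value
            z' τ = zs τ := by
  obtain ⟨ψ, hψ₀, hψ⟩ :=
    (hg.hasStrictDerivAt one_ne_zero).exists_local_fixedPoint_branch hsolv
  have ha₀ : y₀ - β * g y₀ = α * τ₀ := by rw [← hz₀]; linarith
  rw [ha₀] at hψ₀ hψ
  have hT : ∀ᶠ τ in 𝓝 τ₀, ψ (α * τ) = α * τ + β * g (ψ (α * τ)) :=
    ((continuous_const_mul α).tendsto τ₀).eventually hψ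
  refine ⟨{0}ᶜ, compl_singleton_mem_nhds one_ne_zero, fun u_y hu => ?_⟩
  refine ⟨fun v => g (v / u_y), _, hT, fun τ => ψ (α * τ), fun τ => g (ψ (α * τ)),
    fun τ => u_y * ψ (α * τ), fun τ => g (ψ (α * τ)), hψ₀, by simp only [hψ₀, hz₀],
    fun τ hτ => ⟨⟨hτ, rfl⟩, ⟨congrArg (u_y * ·) hτ, ?_⟩, rfl⟩⟩
  simp only [mul_div_cancel_left₀ _ (show u_y ≠ 0 from hu)]

/-- Invariant soft intervention in the nonlinear system `x = τ`, `y = u_y(αx + βz)`,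
`z = g(y)`: for `g` C¹, strictly monotone with nonvanishing derivative, `α ≠ 0`, and
the unintervened system uniquely solvable at the reference point
(`1 - β g'(y₀) ≠ 0`), for every `u_y` near `1` there is a replacement assignment
`z = h(y)` (depending only on `y`) such that the intervened equilibrium `z`-value
equals the unintervened equilibrium `z`-value for all `τ` near `τ₀`. -/
theorem stmt_19 (α β τ₀ y₀ z₀ : ℝ) (hα : α ≠ 0)
    (g : ℝ → ℝ) (hg : ContDiff ℝ 1 g) (hg' : ∀ t, deriv g t ≠ 0)
    (hmono : StrictMono g ∨ StrictAnti g)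
    (hy₀ : y₀ = α * τ₀ + β * z₀) (hz₀ : z₀ = g y₀)
    (hsolv : 1 - β * deriv g y₀ ≠ 0) :
    ∃ W ∈ 𝓝 (1 : ℝ), ∀ u_y ∈ W,
      ∃ h : ℝ → ℝ, ∃ T ∈ 𝓝 τ₀,
        ∃ ys zs y' z' : ℝ → ℝ,
          ys τ₀ = y₀ ∧ zs τ₀ = z₀ ∧
          ∀ τ ∈ T,
            -- unintervened equilibrium branch
            (ys τ = α * τ + β * zs τ ∧ zs τ = g (ys τ)) ∧
            -- intervened equilibrium with the replacement assignment `z = h(y)`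
            (y' τ = u_y * (α * τ + β * z' τ) ∧ z' τ = h (y' τ)) ∧
            -- invariance of the `z`-value
            z' τ = zs τ :=
  stmt_19_general α β τ₀ y₀ z₀ g hg hy₀ hz₀ hsolv
end
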